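/- arXiv:2206.06052 — 5 statements merged into one kernel-verified Lean document; each statement's English description precedes it below -/
import Mathlib

section
/- Let G be a finite simple graph and let v be a vertex of degree 3 in G. If the graph G − v obtained by deleting v has an odd 7-coloring, then G has an odd 7-coloring. -/
/-! Color `v` with a color that avoids, for each of its `d` neighbors `u`, both the color of `u`
and some color occurring an odd number of times around `u` in `G - v`; with more than `2d`
colors such a color exists. The extension is proper and keeps every old odd color, a vertex
whose only neighbor is `v` sees the color of `v` exactly once, and since `d` is odd some color
occurs an odd number of times around `v` itself. -/

/-- A coloring `c` is an odd coloring of `G`: it is proper, and every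
non-isolated vertex has some color appearing an odd number of times in its
neighborhood. -/
def IsOddColoring {V α : Type*} (G : SimpleGraph V) (c : V → α) : Prop :=
  (∀ u v, G.Adj u v → c u ≠ c v) ∧
  ∀ v, (G.neighborSet v).Nonempty → ∃ a : α, Odd {w | G.Adj v w ∧ c w = a}.ncard

/-- `G` has an odd coloring using at most `k` colors. -/
def HasOddColoring {V : Type*} (G : SimpleGraph V) (k : ℕ) : Prop :=
  ∃ c : V → Fin k, IsOddColoring G c

theorem Finset.exists_odd_card_filter_eq {ι α : Type*} [DecidableEq α] {s : Finset ι}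
    (hs : Odd s.card) (f : ι → α) : ∃ a, Odd {i ∈ s | f i = a}.card := by
  by_contra! heven
  rw [Finset.card_eq_sum_card_image f s] at hs
  exact Nat.not_odd_iff_even.mpr (Finset.even_sum _ fun a _ => Nat.not_odd_iff_even.mp (heven a)) hs

theorem Set.exists_odd_ncard_sep_eq {ι α : Type*} {s : Set ι} (hs : Odd s.ncard) (f : ι → α) :
    ∃ a, Odd {i ∈ s | f i = a}.ncard := by
  classical
  obtain ⟨t, rfl⟩ := (Set.finite_of_ncard_ne_zero hs.pos.ne').exists_finset_coe
  rw [Set.ncard_coe_finset] at hs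
  obtain ⟨a, ha⟩ := t.exists_odd_card_filter_eq hs f
  exact ⟨a, by rwa [← Set.ncard_coe_finset, Finset.coe_filter] at ha⟩

theorem Set.exists_forall_ne_of_two_mul_ncard_lt {ι α : Type*} [Finite α] {s : Set ι}
    (hs : s.Finite) (hcard : 2 * s.ncard < Nat.card α) (f g : ι → α) :
    ∃ x, ∀ i ∈ s, f i ≠ x ∧ g i ≠ x := by
  have hlt : (f '' s ∪ g '' s).ncard < Nat.card α := calc
    _ ≤ (f '' s).ncard + (g '' s).ncard := Set.ncard_union_le _ _
    _ ≤ s.ncard + s.ncard := add_le_add (Set.ncard_image_le hs) (Set.ncard_image_le hs)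
    _ < Nat.card α := by omega
  obtain ⟨x, hx⟩ := (Set.ne_univ_iff_exists_notMem (f '' s ∪ g '' s)).1 fun h => by
    rw [h, Set.ncard_univ] at hlt
    exact hlt.false
  exact ⟨x, fun i hi => ⟨fun h => hx (.inl ⟨i, hi, h⟩), fun h => hx (.inr ⟨i, hi, h⟩)⟩⟩

namespace SimpleGraph

variable {V α : Type*} {G : SimpleGraph V} [DecidableEq V] {v : V} {c : V → α} {x : α}

theorem setOf_adj_update_eq_inter_compl {u : V} {b : α} (hb : G.Adj u v → b ≠ x) :
    {w | G.Adj u w ∧ Function.update c v x w = b} = {w | G.Adj u w ∧ c w = b} ∩ {v}ᶜ := by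
  ext w
  by_cases hw : w = v
  · subst hw
    simpa using fun huw hxb => hb huw hxb.symm
  · simp [hw]

theorem setOf_adj_update_self_eq_singleton {u : V} (huv : G.Adj u v)
    (hu : ∀ w, G.Adj u w → w = v) : {w | G.Adj u w ∧ Function.update c v x w = x} = {v} := by
  ext w
  constructor
  · exact fun hw => hu w hw.1
  · rintro rfl
    exact ⟨huv, Function.update_self ..⟩

end SimpleGraph

open SimpleGraph

section

variable {V α : Type*} {G : SimpleGraph V}

theorem isOddColoring_induce_iff {s : Set V} {c : V → α} :
    IsOddColoring (G.induce s) (c ∘ Subtype.val) ↔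
      (∀ u ∈ s, ∀ w ∈ s, G.Adj u w → c u ≠ c w) ∧
      ∀ u ∈ s, (∃ w ∈ s, G.Adj u w) → ∃ a, Odd ({w | G.Adj u w ∧ c w = a} ∩ s).ncard := by
  have hfiber (u : V) (a : α) : {w : s | G.Adj u w ∧ c w = a}.ncard =
      ({w | G.Adj u w ∧ c w = a} ∩ s).ncard :=
    Set.ncard_subtype (· ∈ s) {w | G.Adj u w ∧ c w = a}
  simp [IsOddColoring, Set.Nonempty, hfiber]

variable [DecidableEq V] {v : V} {c : V → α} {x : α}

theorem IsOddColoring.update_of_induce_compl_singleton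
    (hc : IsOddColoring (G.induce {v}ᶜ) (c ∘ Subtype.val)) (hodd : Odd (G.neighborSet v).ncard)
    {a : V → α} (ha : ∀ u ≠ v, (∃ w ≠ v, G.Adj u w) →
      Odd ({w | G.Adj u w ∧ c w = a u} ∩ {v}ᶜ).ncard)
    (hxc : ∀ w, G.Adj v w → c w ≠ x) (hxa : ∀ w, G.Adj v w → a w ≠ x) :
    IsOddColoring G (Function.update c v x) := by
  have hproper := (isOddColoring_induce_iff.1 hc).1
  refine ⟨fun u w huw => ?_, fun u hu => ?_⟩
  · rcases eq_or_ne u v with rfl | hu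
    · rw [Function.update_self, Function.update_of_ne (G.ne_of_adj huw).symm]
      exact (hxc w huw).symm
    rcases eq_or_ne w v with rfl | hw
    · rw [Function.update_self, Function.update_of_ne hu]
      exact hxc u huw.symm
    · rw [Function.update_of_ne hu, Function.update_of_ne hw]
      exact hproper u hu w hw huw
  · by_cases huv : u = v
    · subst huv
      exact Set.exists_odd_ncard_sep_eq hodd _
    by_cases hu' : ∃ w ≠ v, G.Adj u w
    · refine ⟨a u, ?_⟩
      rw [setOf_adj_update_eq_inter_compl fun h => hxa u h.symm]
      exact ha u huv hu'
    · push Not at hu'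
      obtain ⟨w, huw⟩ := hu
      have hw : w = v := by_contra fun h => hu' w h huw
      subst hw
      refine ⟨x, ?_⟩
      rw [setOf_adj_update_self_eq_singleton huw fun w h => by_contra fun h' => hu' w h' h]
      simp

theorem IsOddColoring.exists_update_of_induce_compl_singleton [Finite α]
    (hc : IsOddColoring (G.induce {v}ᶜ) (c ∘ Subtype.val)) (hodd : Odd (G.neighborSet v).ncard)
    (hcard : 2 * (G.neighborSet v).ncard < Nat.card α) :
    ∃ x, IsOddColoring G (Function.update c v x) := by
  have : Nonempty α := (Nat.card_pos_iff.1 (by omega)).1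
  choose! a ha using (isOddColoring_induce_iff.1 hc).2
  obtain ⟨x, hx⟩ := Set.exists_forall_ne_of_two_mul_ncard_lt
    (Set.finite_of_ncard_ne_zero hodd.pos.ne') hcard c a
  exact ⟨x, hc.update_of_induce_compl_singleton hodd ha (fun w hw => (hx w hw).1)
    (fun w hw => (hx w hw).2)⟩

end

theorem HasOddColoring.of_induce_compl_singleton {V : Type*} {G : SimpleGraph V} {v : V} {k : ℕ}
    (h : HasOddColoring (G.induce {v}ᶜ) k) (hodd : Odd (G.neighborSet v).ncard)
    (hk : 2 * (G.neighborSet v).ncard < k) : HasOddColoring G k := by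
  classical
  obtain ⟨c', hc'⟩ := h
  have : Nonempty (Fin k) := ⟨⟨0, by omega⟩⟩
  obtain ⟨c, rfl⟩ := Subtype.val_injective.surjective_comp_right c'
  obtain ⟨x, hx⟩ := hc'.exists_update_of_induce_compl_singleton hodd (by simpa using hk)
  exact ⟨_, hx⟩

theorem hasOddColoring_of_delete_degree_three_general {V : Type*}
    (G : SimpleGraph V) (v : V) (hdeg : (G.neighborSet v).ncard = 3)
    (h : HasOddColoring (G.induce ({v}ᶜ : Set V)) 7) :
    HasOddColoring G 7 :=
  h.of_induce_compl_singleton (by rw [hdeg]; decide) (by rw [hdeg]; norm_num)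

/-- If `v` has degree 3 in `G` and `G - v` has an odd 7-coloring, then so does `G`. -/
theorem hasOddColoring_of_delete_degree_three {V : Type*} [Fintype V]
    (G : SimpleGraph V) (v : V) (hdeg : (G.neighborSet v).ncard = 3)
    (h : HasOddColoring (G.induce ({v}ᶜ : Set V)) 7) :
    HasOddColoring G 7 :=
  hasOddColoring_of_delete_degree_three_general G v hdeg h
end

section
/- Let G be a finite simple graph containing two adjacent vertices u and v that both have degree 2 in G. If the graph G − v obtained by deleting v has an odd 7-coloring, then G has an odd 7-coloring. -/
/-!
Write `N(u) = {v, x}` and `N(v) = {u, y}` and start from an odd colouring `c` of `G - v`, in which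
`u` is a leaf hanging off `x`. Recolouring a leaf disturbs only its neighbour, and `x` keeps an odd
colour for every new colour of `u` but at most one; so `u` can be given a colour other than `c x`
and `c y` while the colouring of `G - v` stays odd. Then `v` takes a colour avoiding `c u`, `c x`,
`c y` and one odd colour of `y` in `G - v`: the neighbourhoods of `u` and `v` carry two distinct
colours, `y` keeps its odd colour, and no other vertex sees `v`. This needs five colours.
-/

open Function

section ColorCount

variable {V α : Type*}

noncomputable def colorCount (N : Set V) (c : V → α) (a : α) : ℕ := {z ∈ N | c z = a}.ncard

def HasOddColor (N : Set V) (c : V → α) : Prop := ∃ a, Odd (colorCount N c a)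

theorem colorCount_congr {N : Set V} {c c' : V → α} (h : Set.EqOn c c' N) :
    colorCount N c = colorCount N c' := by
  funext a
  unfold colorCount
  congr 1
  ext z
  simp only [Set.mem_ofPred_eq]
  exact and_congr_right fun hz => by rw [h hz]

theorem HasOddColor.congr {N : Set V} {c c' : V → α} (h : Set.EqOn c c' N)
    (hc : HasOddColor N c) : HasOddColor N c' := by
  rwa [HasOddColor, ← colorCount_congr h]

theorem hasOddColor_singleton (p : V) (c : V → α) : HasOddColor {p} c := by
  refine ⟨c p, ?_⟩
  have : {z ∈ ({p} : Set V) | c z = c p} = {p} :=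
    Set.ext fun z => ⟨And.left, by rintro rfl; exact ⟨rfl, rfl⟩⟩
  rw [colorCount, this, Set.ncard_singleton]
  exact odd_one

theorem hasOddColor_pair {p q : V} {c : V → α} (h : c p ≠ c q) : HasOddColor {p, q} c := by
  refine ⟨c p, ?_⟩
  have : {z ∈ ({p, q} : Set V) | c z = c p} = {p} := by
    ext z
    simp only [Set.mem_ofPred_eq, Set.mem_insert_iff, Set.mem_singleton_iff]
    constructor
    · rintro ⟨rfl | rfl, hz⟩
      · rfl
      · exact absurd hz.symm h
    · rintro rfl
      exact ⟨Or.inl rfl, rfl⟩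
  rw [colorCount, this, Set.ncard_singleton]
  exact odd_one

variable [DecidableEq V] {M : Set V} {p : V}

theorem colorCount_insert_update_of_ne (hp : p ∉ M) (c : V → α) {a e : α} (hae : a ≠ e) :
    colorCount (insert p M) (update c p a) e = colorCount M c e := by
  unfold colorCount
  congr 1
  ext z
  by_cases hz : z = p
  · subst hz; simp [hp, hae]
  · simp [hz]

theorem colorCount_insert_update_self (hM : M.Finite) (hp : p ∉ M) (c : V → α) (a : α) :
    colorCount (insert p M) (update c p a) a = colorCount M c a + 1 := by
  have : {z ∈ insert p M | update c p a z = a} = insert p {z ∈ M | c z = a} := by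
    ext z
    by_cases hz : z = p
    · subst hz; simp
    · simp [hz]
  rw [colorCount, this, Set.ncard_insert_of_notMem (fun h => hp h.1) (hM.subset fun z hz => hz.1),
    colorCount]

theorem HasOddColor.exists_forall_update {N : Set V} {c : V → α} {u : V} (hN : N.Finite)
    (hu : u ∈ N) (h : HasOddColor N c) : ∃ b, ∀ a, a ≠ b → HasOddColor N (update c u a) := by
  obtain ⟨M, huM, rfl⟩ : ∃ M, u ∉ M ∧ N = insert u M := ⟨N \ {u}, by simp, by simp [hu]⟩
  have hM : M.Finite := hN.subset (Set.subset_insert u M)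
  by_cases hodd : ∃ e, e ≠ c u ∧ Odd (colorCount (insert u M) c e)
  · obtain ⟨e, heu, he⟩ := hodd
    rw [← update_eq_self u c, colorCount_insert_update_of_ne huM c heu.symm] at he
    exact ⟨e, fun a hae => ⟨e, by rwa [colorCount_insert_update_of_ne huM c hae]⟩⟩
  · push Not at hodd
    refine ⟨c u, fun a hau => ⟨a, ?_⟩⟩
    have heven := hodd a hau
    rw [← update_eq_self u c, colorCount_insert_update_of_ne huM c (Ne.symm hau)] at heven
    rw [colorCount_insert_update_self hM huM]
    exact (Nat.not_odd_iff_even.1 heven).add_one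

theorem exists_forall_hasOddColor_insert_update {c : V → α} (hM : M.Finite) (hp : p ∉ M)
    (h : M.Nonempty → HasOddColor M c) :
    ∃ b, ∀ a, a ≠ b → HasOddColor (insert p M) (update c p a) := by
  rcases M.eq_empty_or_nonempty with rfl | hne
  · exact ⟨c p, fun a _ => by simpa using hasOddColor_singleton p (update c p a)⟩
  · obtain ⟨e, he⟩ := h hne
    exact ⟨e, fun a hae => ⟨e, by rwa [colorCount_insert_update_of_ne hp c hae]⟩⟩

end ColorCount

theorem exists_ne_four_of_four_lt_card {α : Type*} [Fintype α] (h : 4 < Fintype.card α)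
    (a b c d : α) : ∃ e, e ≠ a ∧ e ≠ b ∧ e ≠ c ∧ e ≠ d := by
  classical
  obtain ⟨e, -, he⟩ := Finset.exists_mem_notMem_of_card_lt_card
    ((Finset.card_le_four (a := a) (b := b) (c := c) (d := d)).trans_lt
      (h.trans_eq Finset.card_univ.symm))
  simp only [Finset.mem_insert, Finset.mem_singleton, not_or] at he
  exact ⟨e, he⟩

theorem SimpleGraph.exists_neighborSet_eq_pair {V : Type*} {G : SimpleGraph V} {u v : V}
    (hadj : G.Adj u v) (hu : (G.neighborSet u).ncard = 2) :
    ∃ x, x ≠ v ∧ G.neighborSet u = {v, x} := by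
  obtain ⟨p, q, hpq, hN⟩ := Set.ncard_eq_two.1 hu
  have hv : v ∈ G.neighborSet u := hadj
  rw [hN] at hv
  rcases hv with rfl | rfl
  · exact ⟨q, hpq.symm, hN⟩
  · exact ⟨p, hpq, hN.trans (Set.pair_comm _ _)⟩

namespace IsOddColoring

variable {V W α : Type*}

theorem exists_forall_update_of_neighborSet_eq_singleton [Finite W] [DecidableEq W]
    {H : SimpleGraph W} {c : W → α} (hc : IsOddColoring H c) {u x : W}
    (hu : H.neighborSet u = {x}) :
    ∃ b, ∀ a, a ≠ b → a ≠ c x → IsOddColoring H (update c u a) := by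
  have hadj_u : ∀ z, H.Adj u z ↔ z = x := fun z => by
    rw [← SimpleGraph.mem_neighborSet, hu, Set.mem_singleton_iff]
  have hux : H.Adj u x := (hadj_u x).2 rfl
  obtain ⟨b, hb⟩ := HasOddColor.exists_forall_update (Set.toFinite _) hux.symm
    (hc.2 x ⟨u, hux.symm⟩)
  refine ⟨b, fun a hab hax => ⟨fun p q hpq => ?_, fun w hw => ?_⟩⟩
  · by_cases hp : p = u
    · subst hp
      rw [(hadj_u q).1 hpq, update_self, update_of_ne hux.ne']
      exact hax
    by_cases hq : q = u
    · subst hq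
      rw [(hadj_u p).1 hpq.symm, update_self, update_of_ne hux.ne']
      exact hax.symm
    rw [update_of_ne hp, update_of_ne hq]
    exact hc.1 p q hpq
  · by_cases hwu : w = u
    · subst hwu
      show HasOddColor (H.neighborSet w) _
      rw [hu]
      exact hasOddColor_singleton x _
    by_cases hwx : w = x
    · subst hwx
      exact hb a hab
    refine HasOddColor.congr (fun z hz => (update_of_ne ?_ a c).symm) (hc.2 w hw)
    rintro rfl
    exact hwx ((hadj_u w).1 (H.adj_symm hz))

theorem hasOddColor_inter_of_induce {G : SimpleGraph V} {S : Set V} {c : V → α}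
    (hc : IsOddColoring (G.induce S) (c ∘ Subtype.val)) {w : V} (hw : w ∈ S)
    (hne : (G.neighborSet w ∩ S).Nonempty) : HasOddColor (G.neighborSet w ∩ S) c := by
  obtain ⟨z, hz, hzS⟩ := hne
  obtain ⟨a, ha⟩ := hc.2 ⟨w, hw⟩ ⟨⟨z, hzS⟩, hz⟩
  refine ⟨a, ?_⟩
  have : {z ∈ G.neighborSet w ∩ S | c z = a} =
      Subtype.val '' {z : S | (G.induce S).Adj ⟨w, hw⟩ z ∧ (c ∘ Subtype.val) z = a} := by
    ext z
    simp [and_comm]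
  rwa [colorCount, this, Set.ncard_image_of_injective _ Subtype.val_injective]

theorem of_induce_compl_singleton {G : SimpleGraph V} {v : V} {c : V → α}
    (hc : IsOddColoring (G.induce {v}ᶜ) (c ∘ Subtype.val))
    (hprop : ∀ w, G.Adj v w → c w ≠ c v)
    (hnbr : ∀ w, G.Adj v w → HasOddColor (G.neighborSet w) c)
    (hv : HasOddColor (G.neighborSet v) c) : IsOddColoring G c := by
  refine ⟨fun a b hab => ?_, fun w hw => ?_⟩
  · by_cases ha : a = v
    · subst ha
      exact (hprop b hab).symm
    by_cases hb : b = v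
    · subst hb
      exact hprop a hab.symm
    exact hc.1 ⟨a, ha⟩ ⟨b, hb⟩ hab
  · by_cases hwv : w = v
    · subst hwv
      exact hv
    by_cases hadj : G.Adj v w
    · exact hnbr w hadj
    have hN : G.neighborSet w ∩ {v}ᶜ = G.neighborSet w :=
      Set.inter_eq_left.2 fun z hz hzv => hadj (hzv ▸ G.adj_symm hz)
    have := hc.hasOddColor_inter_of_induce hwv (by rwa [hN])
    rwa [hN] at this

section DegreeTwo

variable [Finite V] [DecidableEq V] {G : SimpleGraph V} {u v x : V} {c : V → α}

theorem exists_forall_induce_update_of_neighborSet_eq_pair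
    (hc : IsOddColoring (G.induce {v}ᶜ) (c ∘ Subtype.val)) (hNu : G.neighborSet u = {v, x})
    (hxv : x ≠ v) :
    ∃ b, ∀ a, a ≠ b → a ≠ c x → IsOddColoring (G.induce {v}ᶜ) (update c u a ∘ Subtype.val) := by
  have hu : u ∈ ({v}ᶜ : Set V) :=
    Set.mem_compl_singleton_iff.2 (show G.Adj u v by simp [← SimpleGraph.mem_neighborSet, hNu]).ne
  have hNu' : (G.induce {v}ᶜ).neighborSet ⟨u, hu⟩ = {⟨x, Set.mem_compl_singleton_iff.2 hxv⟩} := by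
    ext ⟨z, hz⟩
    simp only [SimpleGraph.mem_neighborSet, SimpleGraph.induce_adj, Set.mem_singleton_iff,
      Subtype.mk.injEq]
    rw [← SimpleGraph.mem_neighborSet, hNu, Set.mem_insert_iff, Set.mem_singleton_iff,
      or_iff_right (Set.mem_compl_singleton_iff.1 hz)]
  obtain ⟨b, hb⟩ := hc.exists_forall_update_of_neighborSet_eq_singleton hNu'
  refine ⟨b, fun a hab hax => ?_⟩
  rw [update_comp_eq_of_injective c Subtype.val_injective ⟨u, hu⟩]
  exact hb a hab hax

theorem exists_forall_update_of_induce_of_neighborSet_eq_pair {y : V}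
    (hc : IsOddColoring (G.induce {v}ᶜ) (c ∘ Subtype.val)) (hNu : G.neighborSet u = {v, x})
    (hNv : G.neighborSet v = {u, y}) (hxv : x ≠ v) (hyu : y ≠ u) (hcuy : c u ≠ c y) :
    ∃ b, ∀ β, β ≠ b → β ≠ c u → β ≠ c x → β ≠ c y → IsOddColoring G (update c v β) := by
  have huv : G.Adj u v := show v ∈ G.neighborSet u by simp [hNu]
  have hvy : G.Adj v y := show y ∈ G.neighborSet v by simp [hNv]
  obtain ⟨b, hb⟩ := exists_forall_hasOddColor_insert_update (Set.toFinite _)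
    (fun h => h.2 rfl : v ∉ G.neighborSet y \ {v})
    (hc.hasOddColor_inter_of_induce (Set.mem_compl_singleton_iff.2 hvy.ne'))
  rw [Set.insert_sdiff_singleton, Set.insert_eq_of_mem (s := G.neighborSet y) hvy.symm] at hb
  refine ⟨b, fun β hβb hβu hβx hβy => .of_induce_compl_singleton (v := v) ?_ ?_ ?_ ?_⟩
  · rwa [update_comp_eq_of_forall_ne _ _ fun z => Set.mem_compl_singleton_iff.1 z.2]
  · intro w hw
    rw [← SimpleGraph.mem_neighborSet, hNv] at hw
    rcases hw with rfl | rfl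
    · rw [update_of_ne huv.ne, update_self]; exact hβu.symm
    · rw [update_of_ne hvy.ne', update_self]; exact hβy.symm
  · intro w hw
    rw [← SimpleGraph.mem_neighborSet, hNv] at hw
    rcases hw with rfl | rfl
    · rw [hNu]
      exact hasOddColor_pair (by rwa [update_self, update_of_ne hxv])
    · exact hb β hβb
  · rw [hNv]
    exact hasOddColor_pair (by rwa [update_of_ne huv.ne, update_of_ne hvy.ne'])

end DegreeTwo

end IsOddColoring

theorem hasOddColoring_of_neighborSet_eq_pair {V : Type*} [Finite V] {G : SimpleGraph V}
    {u v x y : V} {k : ℕ} (hk : 5 ≤ k) (hNu : G.neighborSet u = {v, x})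
    (hNv : G.neighborSet v = {u, y}) (hxv : x ≠ v) (hyu : y ≠ u)
    (h : HasOddColoring (G.induce {v}ᶜ) k) : HasOddColoring G k := by
  classical
  have hcard : 4 < Fintype.card (Fin k) := by rw [Fintype.card_fin]; omega
  obtain ⟨c₀, hc₀⟩ := h
  have : Nonempty (Fin k) := ⟨c₀ ⟨x, Set.mem_compl_singleton_iff.2 hxv⟩⟩
  obtain ⟨c, rfl⟩ : ∃ c : V → Fin k, c ∘ Subtype.val = c₀ :=
    Subtype.val_injective.surjective_comp_right c₀
  obtain ⟨b, hb⟩ := hc₀.exists_forall_induce_update_of_neighborSet_eq_pair hNu hxv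
  obtain ⟨a, hab, hax, hay, -⟩ := exists_ne_four_of_four_lt_card hcard b (c x) (c y) (c y)
  obtain ⟨b', hb'⟩ := (hb a hab hax).exists_forall_update_of_induce_of_neighborSet_eq_pair hNu hNv
    hxv hyu (by rwa [update_self, update_of_ne hyu])
  obtain ⟨β, hβb', hβu, hβx, hβy⟩ := exists_ne_four_of_four_lt_card hcard b'
    (update c u a u) (update c u a x) (update c u a y)
  exact ⟨_, hb' β hβb' hβu hβx hβy⟩

/-- If `u` and `v` are adjacent vertices both of degree 2 in `G` and `G - v` has an
odd 7-coloring, then so does `G`. -/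
theorem hasOddColoring_of_delete_adjacent_degree_two {V : Type*} [Fintype V]
    (G : SimpleGraph V) (u v : V) (hadj : G.Adj u v)
    (hdu : (G.neighborSet u).ncard = 2) (hdv : (G.neighborSet v).ncard = 2)
    (h : HasOddColoring (G.induce ({v}ᶜ : Set V)) 7) :
    HasOddColoring G 7 := by
  obtain ⟨x, hxv, hNu⟩ := G.exists_neighborSet_eq_pair hadj hdu
  obtain ⟨y, hyu, hNv⟩ := G.exists_neighborSet_eq_pair hadj.symm hdv
  exact hasOddColoring_of_neighborSet_eq_pair (by norm_num) hNu hNv hxv hyu h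
end

section
/- Let G be a finite simple graph with adjacent vertices u and v, both of odd degree in G, and let G′ be the graph obtained from G by subdividing the edge uv, i.e., by deleting the edge uv and adding a new vertex w adjacent exactly to u and to v. If G′ has an odd 7-coloring, then G has an odd 7-coloring. -/
/-!
Restrict the colouring of `G'` to `V`. The subdivision vertex has exactly the two neighbours
`u` and `v`, so the oddness condition there forces them to get different colours, which keeps
the restriction proper on the edge `uv`. Every other vertex of `V` has the same neighbourhood in
both graphs, and at `u` and `v` the oddness condition holds for any colouring: an odd set split
into colour classes has an odd class.
-/

open Set Function

theorem Set.exists_odd_ncard_sep_of_odd_ncard {α β : Type*} {S : Set α} (hS : Odd S.ncard)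
    (c : α → β) : ∃ b, Odd {x ∈ S | c x = b}.ncard := by
  classical
  obtain ⟨s, rfl⟩ := (finite_of_ncard_ne_zero hS.pos.ne').exists_finset_coe
  by_contra! hfib
  rw [ncard_coe_finset, Finset.card_eq_sum_card_image c s] at hS
  refine Nat.not_even_iff_odd.2 hS (Finset.even_sum _ fun b _ => ?_)
  simpa [← Finset.coe_filter] using hfib b

namespace SimpleGraph

variable {V W α : Type*}

theorem ncard_adj_and_eq_of_neighborSet_eq_image {G : SimpleGraph V} {H : SimpleGraph W}
    {f : V → W} (hf : Injective f) {x : V} (hx : H.neighborSet (f x) = f '' G.neighborSet x)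
    (c : W → α) (a : α) :
    {w | H.Adj (f x) w ∧ c w = a}.ncard = {w | G.Adj x w ∧ c (f w) = a}.ncard := by
  have hfib : {w | H.Adj (f x) w ∧ c w = a} = f '' {w | G.Adj x w ∧ c (f w) = a} := by
    change H.neighborSet (f x) ∩ c ⁻¹' {a} = f '' (G.neighborSet x ∩ f ⁻¹' (c ⁻¹' {a}))
    rw [image_inter_preimage, hx]
  rw [hfib, ncard_image_of_injective _ hf]

end SimpleGraph

namespace IsOddColoring

variable {V α : Type*} {G : SimpleGraph V} {c : V → α}

theorem ne_of_neighborSet_eq_pair (hc : IsOddColoring G c) {w x y : V} (hxy : x ≠ y)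
    (hw : G.neighborSet w = {x, y}) : c x ≠ c y := by
  intro hcxy
  obtain ⟨a, ha⟩ := hc.2 w (hw ▸ insert_nonempty x {y})
  by_cases hxa : c x = a
  · have hfib : {z | G.Adj w z ∧ c z = a} = {x, y} := by
      change G.neighborSet w ∩ c ⁻¹' {a} = _
      rw [hw, inter_eq_left]
      rintro z (rfl | rfl) <;> simp [hxa, ← hcxy]
    rw [hfib, ncard_pair hxy] at ha
    exact Nat.not_odd_iff_even.2 even_two ha
  · have hfib : {z | G.Adj w z ∧ c z = a} = ∅ := by
      change G.neighborSet w ∩ c ⁻¹' {a} = _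
      rw [hw, eq_empty_iff_forall_notMem]
      rintro z ⟨rfl | rfl, hz⟩ <;> simp_all
    simp [hfib] at ha

end IsOddColoring

theorem hasOddColoring_of_subdivide_general {V : Type*}
    (G : SimpleGraph V) (u v : V)
    (hu : Odd (G.neighborSet u).ncard) (hv : Odd (G.neighborSet v).ncard)
    (G' : SimpleGraph (Option V))
    (hsome : ∀ x y : V, G'.Adj (some x) (some y) ↔
      G.Adj x y ∧ ¬(x = u ∧ y = v) ∧ ¬(x = v ∧ y = u))
    (hnew : ∀ x : V, G'.Adj none (some x) ↔ x = u ∨ x = v)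
    (h : HasOddColoring G' 7) :
    HasOddColoring G 7 := by
  obtain ⟨c', hc'⟩ := h
  have hnone : G'.neighborSet none = {some u, some v} := by
    ext (_ | x)
    · simp
    · simp [hnew]
  have hcuv (huv : u ≠ v) : c' (some u) ≠ c' (some v) :=
    hc'.ne_of_neighborSet_eq_pair (by simpa using huv) hnone
  have hnbr {x : V} (hxu : x ≠ u) (hxv : x ≠ v) :
      G'.neighborSet (some x) = some '' G.neighborSet x := by
    ext (_ | y)
    · simp [G'.adj_comm _ none, hnew, hxu, hxv]
    · simp [hsome, hxu, hxv]
  refine ⟨c' ∘ some, fun x y hxy => ?_, fun x hx => ?_⟩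
  · by_cases hxy' : x = u ∧ y = v
    · obtain ⟨rfl, rfl⟩ := hxy'
      exact hcuv hxy.ne
    by_cases hyx' : x = v ∧ y = u
    · obtain ⟨rfl, rfl⟩ := hyx'
      exact (hcuv hxy.ne').symm
    exact hc'.1 _ _ ((hsome x y).2 ⟨hxy, hxy', hyx'⟩)
  by_cases hxuv : x = u ∨ x = v
  · have hdeg : Odd (G.neighborSet x).ncard := by rcases hxuv with rfl | rfl <;> assumption
    exact (G.neighborSet x).exists_odd_ncard_sep_of_odd_ncard hdeg (c' ∘ some)
  push Not at hxuv
  obtain ⟨a, ha⟩ := hc'.2 (some x) (by simpa [hnbr hxuv.1 hxuv.2] using hx)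
  exact ⟨a, SimpleGraph.ncard_adj_and_eq_of_neighborSet_eq_image (Option.some_injective V)
    (hnbr hxuv.1 hxuv.2) c' a ▸ ha⟩

/-- Let `u` and `v` be adjacent vertices of odd degree in `G`, and let `G'` be
obtained from `G` by subdividing the edge `uv` with a new vertex (`none`).  If `G'`
has an odd 7-coloring, then so does `G`. -/
theorem hasOddColoring_of_subdivide {V : Type*} [Fintype V]
    (G : SimpleGraph V) (u v : V) (huv : G.Adj u v)
    (hu : Odd (G.neighborSet u).ncard) (hv : Odd (G.neighborSet v).ncard)
    (G' : SimpleGraph (Option V))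
    (hsome : ∀ x y : V, G'.Adj (some x) (some y) ↔
      G.Adj x y ∧ ¬(x = u ∧ y = v) ∧ ¬(x = v ∧ y = u))
    (hnew : ∀ x : V, G'.Adj none (some x) ↔ x = u ∨ x = v)
    (h : HasOddColoring G' 7) :
    HasOddColoring G 7 :=
  hasOddColoring_of_subdivide_general G u v hu hv G' hsome hnew h
end

section
/- Let G be a finite simple graph, let v be a vertex of degree 2 in G with two distinct neighbors u₁ and u₂, and suppose G − v has an odd 7-coloring c with c(u₁) ≠ c(u₂). Then G has an odd 7-coloring. -/
section ExtendColoring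

variable {V α : Type*} {G : SimpleGraph V} {v : V} {c : ({v}ᶜ : Set V) → α}

def IsSafeColor (G : SimpleGraph V) (v : V) (c : ({v}ᶜ : Set V) → α) (b : α) : Prop :=
  ∀ u : ({v}ᶜ : Set V), G.Adj v u → c u ≠ b ∧
    (((G.induce {v}ᶜ).neighborSet u).Nonempty →
      ∃ a ≠ b, Odd {x | (G.induce {v}ᶜ).Adj u x ∧ c x = a}.ncard)

theorem IsOddColoring.exists_isSafeColor [Fintype α] (hc : IsOddColoring (G.induce {v}ᶜ) c)
    (N : Finset V) (hN : G.neighborSet v ⊆ N) (hcard : 2 * N.card < Fintype.card α) :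
    ∃ b, IsSafeColor G v c b := by
  classical
  have hodd (u : ({v}ᶜ : Set V)) : ∃ a, ((G.induce {v}ᶜ).neighborSet u).Nonempty →
      Odd {x | (G.induce {v}ᶜ).Adj u x ∧ c x = a}.ncard := by
    by_cases hu : ((G.induce {v}ᶜ).neighborSet u).Nonempty
    · exact (hc.2 u hu).imp fun _ ha _ => ha
    · exact ⟨c u, fun h => absurd h hu⟩
  choose f hf using hodd
  set M := N.subtype (· ∈ ({v}ᶜ : Set V))
  have hM : (M.image c ∪ M.image f).card < (Finset.univ : Finset α).card := by
    calc (M.image c ∪ M.image f).card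
        ≤ M.card + M.card :=
          (Finset.card_union_le _ _).trans (add_le_add Finset.card_image_le Finset.card_image_le)
      _ ≤ 2 * N.card := by
          rw [Finset.card_subtype]
          linarith [Finset.card_filter_le N (· ∈ ({v}ᶜ : Set V))]
      _ < _ := hcard
  obtain ⟨b, -, hb⟩ := Finset.exists_mem_notMem_of_card_lt_card hM
  refine ⟨b, fun u hu => ?_⟩
  have huM : u ∈ M := Finset.mem_subtype.mpr (hN hu)
  refine ⟨fun h => hb ?_, fun hne => ⟨f u, fun h => hb ?_, hf u hne⟩⟩
  · exact h ▸ Finset.mem_union_left _ (Finset.mem_image_of_mem c huM)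
  · exact h ▸ Finset.mem_union_right _ (Finset.mem_image_of_mem f huM)

variable [DecidableEq V]

def extendColoring (v : V) (c : ({v}ᶜ : Set V) → α) (b : α) : V → α :=
  fun x => if hx : x = v then b else c ⟨x, hx⟩

variable {b : α}

@[simp]
lemma extendColoring_self : extendColoring v c b v = b :=
  dif_pos rfl

lemma extendColoring_of_ne {x : V} (hx : x ≠ v) : extendColoring v c b x = c ⟨x, hx⟩ :=
  dif_neg hx

@[simp]
lemma extendColoring_coe (x : ({v}ᶜ : Set V)) : extendColoring v c b x = c x :=
  extendColoring_of_ne (Set.mem_compl_singleton_iff.mp x.2)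

lemma ncard_adj_extendColoring {w : ({v}ᶜ : Set V)} {a : α} (h : G.Adj w v → a ≠ b) :
    {x | G.Adj w x ∧ extendColoring v c b x = a}.ncard =
      {x | (G.induce {v}ᶜ).Adj w x ∧ c x = a}.ncard := by
  rw [← Set.ncard_image_of_injective _ Subtype.val_injective]
  congr 1
  ext x
  constructor
  · rintro ⟨hwx, hx⟩
    have hxv : x ≠ v := by
      rintro rfl
      exact h hwx (by simpa using hx.symm)
    exact ⟨⟨x, hxv⟩, ⟨hwx, by rwa [extendColoring_of_ne hxv] at hx⟩, rfl⟩
  · rintro ⟨x, ⟨hwx, hx⟩, rfl⟩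
    exact ⟨hwx, by simpa using hx⟩

lemma setOf_adj_extendColoring_eq_singleton {w : ({v}ᶜ : Set V)} (hwv : G.Adj w v)
    (hw : ¬((G.induce {v}ᶜ).neighborSet w).Nonempty) :
    {x | G.Adj w x ∧ extendColoring v c b x = b} = {v} := by
  ext x
  refine ⟨fun ⟨hwx, _⟩ => ?_, fun hx => ?_⟩
  · by_contra hxv
    exact hw ⟨⟨x, hxv⟩, hwx⟩
  · subst hx
    exact ⟨hwv, extendColoring_self⟩

theorem isOddColoring_extendColoring (hc : IsOddColoring (G.induce {v}ᶜ) c)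
    (hb : IsSafeColor G v c b)
    (hv : ∃ a, Odd {x | G.Adj v x ∧ extendColoring v c b x = a}.ncard) :
    IsOddColoring G (extendColoring v c b) := by
  have hne_v (u : ({v}ᶜ : Set V)) (hu : G.Adj v u) :
      extendColoring v c b u ≠ extendColoring v c b v := by
    simpa using (hb u hu).1
  refine ⟨fun x y hxy => ?_, fun w hw => ?_⟩
  · by_cases hx : x = v
    · subst hx
      exact (hne_v ⟨y, hxy.ne'⟩ hxy).symm
    by_cases hy : y = v
    · subst hy
      exact hne_v ⟨x, hx⟩ hxy.symm
    rw [extendColoring_of_ne hx, extendColoring_of_ne hy]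
    exact hc.1 ⟨x, hx⟩ ⟨y, hy⟩ hxy
  · by_cases hwv : w = v
    · subst hwv
      exact hv
    obtain ⟨w, rfl⟩ : ∃ w' : ({v}ᶜ : Set V), (w' : V) = w := ⟨⟨w, hwv⟩, rfl⟩
    by_cases hadj : G.Adj w v
    · by_cases hw' : ((G.induce {v}ᶜ).neighborSet w).Nonempty
      · obtain ⟨a, hab, ha⟩ := (hb w hadj.symm).2 hw'
        exact ⟨a, by rwa [ncard_adj_extendColoring fun _ => hab]⟩
      · refine ⟨b, ?_⟩
        rw [setOf_adj_extendColoring_eq_singleton hadj hw', Set.ncard_singleton]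
        exact odd_one
    · obtain ⟨x, hwx⟩ := hw
      have hxv : x ≠ v := by
        rintro rfl
        exact hadj hwx
      obtain ⟨a, ha⟩ := hc.2 w ⟨⟨x, hxv⟩, hwx⟩
      exact ⟨a, by rwa [ncard_adj_extendColoring fun h => absurd h hadj]⟩

end ExtendColoring

lemma odd_ncard_adj_of_neighborSet_eq_pair {V α : Type*} {G : SimpleGraph V} {v u₁ u₂ : V}
    {c : V → α} (hN : G.neighborSet v = {u₁, u₂}) (hc : c u₁ ≠ c u₂) :
    Odd {x | G.Adj v x ∧ c x = c u₁}.ncard := by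
  have hset : {x | G.Adj v x ∧ c x = c u₁} = {u₁} := by
    ext x
    have hx := Set.ext_iff.mp hN x
    simp only [SimpleGraph.mem_neighborSet, Set.mem_insert_iff, Set.mem_singleton_iff] at hx
    simp only [Set.mem_ofPred_eq, Set.mem_singleton_iff, hx]
    constructor
    · rintro ⟨rfl | rfl, hcx⟩
      · rfl
      · exact absurd hcx.symm hc
    · rintro rfl
      exact ⟨Or.inl rfl, rfl⟩
  rw [hset, Set.ncard_singleton]
  exact odd_one

theorem hasOddColoring_of_delete_degree_two_general {V : Type*}
    (G : SimpleGraph V) (v u₁ u₂ : V)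
    (hN : G.neighborSet v = {u₁, u₂})
    (h : ∃ c : ({v}ᶜ : Set V) → Fin 7,
      IsOddColoring (G.induce ({v}ᶜ : Set V)) c ∧
      ∀ w₁ w₂ : ({v}ᶜ : Set V), (w₁ : V) = u₁ → (w₂ : V) = u₂ → c w₁ ≠ c w₂) :
    HasOddColoring G 7 := by
  classical
  obtain ⟨c, hc, hdiff⟩ := h
  have hadj {u : V} (hu : u ∈ ({u₁, u₂} : Set V)) : G.Adj v u := by
    rwa [← SimpleGraph.mem_neighborSet, hN]
  obtain ⟨b, hb⟩ := hc.exists_isSafeColor {u₁, u₂} (by simp [hN])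
    (by rw [Fintype.card_fin]; linarith [Finset.card_le_two (a := u₁) (b := u₂)])
  refine ⟨extendColoring v c b, isOddColoring_extendColoring hc hb ⟨_,
    odd_ncard_adj_of_neighborSet_eq_pair hN ?_⟩⟩
  have hu₁ : u₁ ≠ v := (hadj (by simp)).ne'
  have hu₂ : u₂ ≠ v := (hadj (by simp)).ne'
  rw [extendColoring_of_ne hu₁, extendColoring_of_ne hu₂]
  exact hdiff ⟨u₁, hu₁⟩ ⟨u₂, hu₂⟩ rfl rfl

/-- If `v` has degree 2 with distinct neighbors `u₁` and `u₂`, and `G - v` has an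
odd 7-coloring giving `u₁` and `u₂` different colors, then `G` has an odd
7-coloring. -/
theorem hasOddColoring_of_delete_degree_two {V : Type*} [Fintype V]
    (G : SimpleGraph V) (v u₁ u₂ : V) (hne : u₁ ≠ u₂)
    (hN : G.neighborSet v = {u₁, u₂})
    (h : ∃ c : ({v}ᶜ : Set V) → Fin 7,
      IsOddColoring (G.induce ({v}ᶜ : Set V)) c ∧
      ∀ w₁ w₂ : ({v}ᶜ : Set V), (w₁ : V) = u₁ → (w₂ : V) = u₂ → c w₁ ≠ c w₂) :
    HasOddColoring G 7 :=
  hasOddColoring_of_delete_degree_two_general G v u₁ u₂ hN h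
end

section
/- Let G be a finite simple graph and let v be a vertex of degree 5 in G such that at least 4 of the neighbors of v have odd degree in G. If the graph G − v obtained by deleting v has an odd 7-coloring, then G has an odd 7-coloring. -/
/-! Odd-degree vertices, `v` among them, never need attention: a neighborhood of odd size always
contains some color an odd number of times. So color `v` with a color avoiding the five colors of
its neighbors and one odd color (in `G - v`) of its at most one even-degree neighbor; at most six
colors are excluded. The only vertices whose odd color could be destroyed are the even-degree
neighbors of `v`, and for those the new color differs from the protected odd color. -/

theorem Set.exists_odd_ncard_sep_of_odd_ncard_s10 {V α : Type*} {s : Set V} (c : V → α)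
    (hs : Odd s.ncard) : ∃ a, Odd {w ∈ s | c w = a}.ncard := by
  classical
  have hfin : s.Finite := Set.finite_of_ncard_ne_zero hs.pos.ne'
  by_contra! heven
  have hsum : s.ncard = ∑ a ∈ hfin.toFinset.image c, {w ∈ s | c w = a}.ncard := by
    rw [Set.ncard_eq_toFinset_card s hfin, Finset.card_eq_sum_card_image c]
    refine Finset.sum_congr rfl fun a _ => ?_
    rw [← Set.ncard_coe_finset]
    congr 1
    ext
    simp
  exact Nat.not_even_iff_odd.2 hs
    (hsum ▸ Finset.even_sum _ fun a _ => Nat.not_odd_iff_even.1 (heven a))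

namespace SimpleGraph

variable {V α : Type*} (G : SimpleGraph V) {v : V}

theorem neighborSet_induce_compl_singleton_nonempty {u : ({v}ᶜ : Set V)}
    (hu : (G.neighborSet u).Nonempty) (heven : ¬Odd (G.neighborSet u).ncard) :
    ((G.induce ({v}ᶜ : Set V)).neighborSet u).Nonempty := by
  by_contra hempty
  have hsub : G.neighborSet u ⊆ {v} := fun w hw => by
    by_contra hwv
    exact hempty ⟨⟨w, hwv⟩, hw⟩
  obtain hnil | hsingle := Set.subset_singleton_iff_eq.1 hsub
  · exact hu.ne_empty hnil
  · exact heven (by simp [hsingle])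

variable (v) in
open Classical in
noncomputable def extendColoring (c₀ : ({v}ᶜ : Set V) → α) (b : α) : V → α :=
  fun w => if h : w = v then b else c₀ ⟨w, h⟩

@[simp]
theorem extendColoring_self (c₀ : ({v}ᶜ : Set V) → α) (b : α) :
    extendColoring v c₀ b v = b := by
  simp [extendColoring]

@[simp]
theorem extendColoring_coe (c₀ : ({v}ᶜ : Set V) → α) (b : α) (w : ({v}ᶜ : Set V)) :
    extendColoring v c₀ b w = c₀ w := by
  unfold extendColoring
  exact dif_neg w.2

theorem ncard_adj_extendColoring (c₀ : ({v}ᶜ : Set V) → α) {b a : α}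
    (u : ({v}ᶜ : Set V)) (hba : G.Adj u v → b ≠ a) :
    {w | G.Adj u w ∧ extendColoring v c₀ b w = a}.ncard =
      {w | (G.induce ({v}ᶜ : Set V)).Adj u w ∧ c₀ w = a}.ncard := by
  rw [← Set.ncard_image_of_injective _ Subtype.val_injective]
  congr 1
  ext w
  by_cases hwv : w = v
  · subst hwv
    simpa using hba
  · lift w to ({v}ᶜ : Set V) using hwv
    simp only [Set.mem_ofPred_eq, Set.mem_image, extendColoring_coe, Subtype.val_inj,
      exists_eq_right, comap_adj, Function.Embedding.subtype_apply]

theorem isOddColoring_extendColoring {c₀ : ({v}ᶜ : Set V) → α} {b : α}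
    (hc₀ : IsOddColoring (G.induce ({v}ᶜ : Set V)) c₀) (hv : Odd (G.neighborSet v).ncard)
    (hb : ∀ u : ({v}ᶜ : Set V), G.Adj v u → c₀ u ≠ b)
    (hoddColor : ∀ u : ({v}ᶜ : Set V), G.Adj v u → ¬Odd (G.neighborSet u).ncard →
      ∃ a ≠ b, Odd {w | (G.induce ({v}ᶜ : Set V)).Adj u w ∧ c₀ w = a}.ncard) :
    IsOddColoring G (extendColoring v c₀ b) := by
  refine ⟨fun x y hxy => ?_, fun u hu => ?_⟩
  · by_cases hx : x = v
    · subst x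
      lift y to ({v}ᶜ : Set V) using (G.ne_of_adj hxy).symm
      simpa using (hb y hxy).symm
    by_cases hy : y = v
    · subst y
      lift x to ({v}ᶜ : Set V) using hx
      simpa using hb x hxy.symm
    lift x to ({v}ᶜ : Set V) using hx
    lift y to ({v}ᶜ : Set V) using hy
    simpa using hc₀.1 x y hxy
  by_cases hodd : Odd (G.neighborSet u).ncard
  · exact Set.exists_odd_ncard_sep_of_odd_ncard_s10 _ hodd
  have huv : u ≠ v := by rintro rfl; exact hodd hv
  lift u to ({v}ᶜ : Set V) using huv
  obtain ⟨a, hba, ha⟩ : ∃ a, (G.Adj u v → b ≠ a) ∧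
      Odd {w | (G.induce ({v}ᶜ : Set V)).Adj u w ∧ c₀ w = a}.ncard := by
    by_cases huv : G.Adj v u
    · obtain ⟨a, hab, ha⟩ := hoddColor u huv hodd
      exact ⟨a, fun _ => hab.symm, ha⟩
    · obtain ⟨a, ha⟩ := hc₀.2 u (G.neighborSet_induce_compl_singleton_nonempty hu hodd)
      exact ⟨a, fun h => absurd h.symm huv, ha⟩
  exact ⟨a, G.ncard_adj_extendColoring c₀ u hba ▸ ha⟩

theorem exists_color_extending_isOddColoring {k : ℕ} {c₀ : ({v}ᶜ : Set V) → Fin k}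
    (hc₀ : IsOddColoring (G.induce ({v}ᶜ : Set V)) c₀) (hv : Odd (G.neighborSet v).ncard)
    (hk : (G.neighborSet v).ncard +
      {w | G.Adj v w ∧ ¬Odd (G.neighborSet w).ncard}.ncard < k) :
    ∃ b, (∀ u : ({v}ᶜ : Set V), G.Adj v u → c₀ u ≠ b) ∧
      ∀ u : ({v}ᶜ : Set V), G.Adj v u → ¬Odd (G.neighborSet u).ncard →
        ∃ a ≠ b, Odd {w | (G.induce ({v}ᶜ : Set V)).Adj u w ∧ c₀ w = a}.ncard := by
  set N := G.neighborSet v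
  set E := {w | G.Adj v w ∧ ¬Odd (G.neighborSet w).ncard}
  have hN : N.Finite := Set.finite_of_ncard_ne_zero hv.pos.ne'
  have hNrange : N ⊆ Set.range ((↑) : ({v}ᶜ : Set V) → V) :=
    fun w hw => ⟨⟨w, (G.ne_of_adj hw).symm⟩, rfl⟩
  have hEN : E ⊆ N := fun _ hw => hw.1
  have hoddColor : ∀ u : ((↑) ⁻¹' E : Set ({v}ᶜ : Set V)),
      ∃ a, Odd {w | (G.induce ({v}ᶜ : Set V)).Adj u w ∧ c₀ w = a}.ncard :=
    fun u => hc₀.2 u (G.neighborSet_induce_compl_singleton_nonempty ⟨v, u.2.1.symm⟩ u.2.2)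
  choose oddColor hoddColor using hoddColor
  have hNpre : ((↑) ⁻¹' N : Set ({v}ᶜ : Set V)).ncard = N.ncard :=
    Set.ncard_preimage_of_injective_subset_range Subtype.val_injective hNrange
  have hEpre : ((↑) ⁻¹' E : Set ({v}ᶜ : Set V)).ncard = E.ncard :=
    Set.ncard_preimage_of_injective_subset_range Subtype.val_injective (hEN.trans hNrange)
  have hfin : ((↑) ⁻¹' N : Set ({v}ᶜ : Set V)).Finite :=
    hN.preimage Subtype.val_injective.injOn
  have hoddColor_card : (Set.range oddColor).ncard ≤ E.ncard := by
    have : Finite ((↑) ⁻¹' E : Set ({v}ᶜ : Set V)) :=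
      (hfin.subset (Set.preimage_mono hEN)).to_subtype
    rw [← hEpre, ← Nat.card_coe_set_eq, ← Nat.card_coe_set_eq]
    exact Finite.card_range_le oddColor
  have hcard :
      (c₀ '' ((↑) ⁻¹' N)).ncard + (Set.range oddColor).ncard < Nat.card (Fin k) := by
    calc (c₀ '' ((↑) ⁻¹' N)).ncard + (Set.range oddColor).ncard
        ≤ N.ncard + E.ncard := by
          gcongr
          exact hNpre ▸ Set.ncard_image_le hfin
      _ < Nat.card (Fin k) := by simpa using hk
  obtain ⟨b, hb⟩ := (Set.ne_univ_iff_exists_notMem _).1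
    (Set.union_ne_univ_of_ncard_add_ncard_lt hcard)
  refine ⟨b, fun u hu hub => hb (Or.inl ⟨u, hu, hub⟩), fun u hu heven => ?_⟩
  exact ⟨oddColor ⟨u, hu, heven⟩, fun hab => hb (Or.inr ⟨_, hab⟩),
    hoddColor ⟨u, hu, heven⟩⟩

theorem hasOddColoring_of_hasOddColoring_induce_compl_singleton {k : ℕ}
    (hv : Odd (G.neighborSet v).ncard)
    (hk : (G.neighborSet v).ncard +
      {w | G.Adj v w ∧ ¬Odd (G.neighborSet w).ncard}.ncard < k)
    (h : HasOddColoring (G.induce ({v}ᶜ : Set V)) k) : HasOddColoring G k := by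
  obtain ⟨c₀, hc₀⟩ := h
  obtain ⟨b, hb, hoddColor⟩ := G.exists_color_extending_isOddColoring hc₀ hv hk
  exact ⟨extendColoring v c₀ b, G.isOddColoring_extendColoring hc₀ hv hb hoddColor⟩

end SimpleGraph

theorem hasOddColoring_of_delete_degree_five_general {V : Type*}
    (G : SimpleGraph V) (v : V) (hdeg : (G.neighborSet v).ncard = 5)
    (hodd : 4 ≤ {w | G.Adj v w ∧ Odd (G.neighborSet w).ncard}.ncard)
    (h : HasOddColoring (G.induce ({v}ᶜ : Set V)) 7) :
    HasOddColoring G 7 := by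
  have hv : Odd (G.neighborSet v).ncard := hdeg ▸ by decide
  have hsplit := Set.ncard_inter_add_ncard_sdiff_eq_ncard (G.neighborSet v)
    {w | Odd (G.neighborSet w).ncard} (Set.finite_of_ncard_ne_zero hv.pos.ne')
  refine G.hasOddColoring_of_hasOddColoring_induce_compl_singleton hv ?_ h
  change 4 ≤ (G.neighborSet v ∩ {w | Odd (G.neighborSet w).ncard}).ncard at hodd
  change _ + (G.neighborSet v \ {w | Odd (G.neighborSet w).ncard}).ncard < 7
  omega

/-- If `v` has degree 5 and at least 4 of its neighbors have odd degree, and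
`G - v` has an odd 7-coloring, then so does `G`. -/
theorem hasOddColoring_of_delete_degree_five {V : Type*} [Fintype V]
    (G : SimpleGraph V) (v : V) (hdeg : (G.neighborSet v).ncard = 5)
    (hodd : 4 ≤ {w | G.Adj v w ∧ Odd (G.neighborSet w).ncard}.ncard)
    (h : HasOddColoring (G.induce ({v}ᶜ : Set V)) 7) :
    HasOddColoring G 7 :=
  hasOddColoring_of_delete_degree_five_general G v hdeg hodd h
end
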